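/- arXiv:2006.02883 — 4 statements merged into one kernel-verified Lean document; each statement's English description precedes it below -/
import Mathlib

section
/- Let K be a field and F the free Lie algebra over K on m ≥ 2 generators x₁,…,x_m. For any nonzero K-linear map χ : F/[F,F] → K, the ideal I_χ = π⁻¹(ker χ) (where π : F → F/[F,F] is the projection) is not finitely generated as a Lie algebra. -/
/-!
Let `ψ` be a nonzero character of the free Lie algebra `F` on `x₁, …, x_m` and pick `j ≠ k` with
`ψ xⱼ ≠ 0`. Sending `xᵢ ↦ !![ψ xᵢ • X, δᵢₖ; 0, 0]` defines a representation of `F` by `2 × 2`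
matrices over `K[X]` (it lands in the affine Lie algebra `K X ⋉ K[X]`) whose `(0, 0)` entry is
`ψ(z) • X`. Hence it maps `ker ψ` into the abelian Lie algebra of strictly upper triangular
matrices, so if `ker ψ` were generated by a finite set `s`, its image would lie in the linear span
of the image of `s`, whose upper right entries span a finite-dimensional subspace of `K[X]`. But
`ker ψ` contains `(ad xⱼ)ⁿ (ψ xⱼ • xₖ - ψ xₖ • xⱼ)`, whose upper right entry is
`(ψ xⱼ)ⁿ⁺¹ • Xⁿ`.
-/

universe u

attribute [local instance 100] LieRing.ofAssociativeRing

open Polynomial LieAlgebra LieSubalgebra Matrix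

theorem Matrix.lie_fin_two_of_row_one_eq_zero {A : Type*} [CommRing A] (x y p q : A) :
    ⁅!![x, p; 0, 0], !![y, q; 0, 0]⁆ = !![0, x * q - y * p; 0, 0] := by
  ext i j
  fin_cases i <;> fin_cases j <;> simp [Ring.lie_def]
  ring

theorem LieHom.image_lieSpan_subset_span {R L L₂ : Type*} [CommRing R] [LieRing L]
    [LieAlgebra R L] [LieRing L₂] [LieAlgebra R L₂] (f : L →ₗ⁅R⁆ L₂) {s : Set L}
    (hs : ∀ x ∈ s, ∀ y ∈ s, ⁅f x, f y⁆ = 0) :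
    f '' lieSpan R L s ⊆ Submodule.span R (f '' s) := by
  rintro _ ⟨x, hx, rfl⟩
  have hfx : f x ∈ (lieSpan R L s).map f := ⟨x, hx, rfl⟩
  rwa [map_lieSpan, ← mem_toSubmodule, coe_lieSpan_eq_span_of_forall_lie_eq_zero] at hfx
  rintro _ ⟨x, hx, rfl⟩ _ ⟨y, hy, rfl⟩
  exact hs x hx y hy

theorem FreeLieAlgebra.lieSpan_range_of (R X : Type*) [CommRing R] :
    lieSpan R (FreeLieAlgebra R X) (Set.range (of R)) = ⊤ := by
  set S := lieSpan R (FreeLieAlgebra R X) (Set.range (of R))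
  let f : FreeLieAlgebra R X →ₗ⁅R⁆ S := lift R fun x => ⟨of R x, subset_lieSpan ⟨x, rfl⟩⟩
  have hf : S.incl.comp f = LieHom.id := hom_ext fun x => by simp [f]
  refine eq_top_iff.mpr fun z _ => ?_
  have hz : (f z : FreeLieAlgebra R X) = z := LieHom.congr_fun hf z
  exact hz ▸ (f z).2

theorem Polynomial.not_fg_of_forall_X_pow_mem {R : Type*} [CommRing R] [Nontrivial R]
    {W : Submodule R R[X]} (h : ∀ n, (X : R[X]) ^ n ∈ W) : ¬ W.FG := by
  have : W = ⊤ := eq_top_iff.mpr fun p _ => by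
    rw [p.as_sum_range_C_mul_X_pow]
    exact Submodule.sum_mem _ fun i _ => by rw [← smul_eq_C_mul]; exact W.smul_mem _ (h i)
  rw [this, ← Module.finite_def]
  exact Polynomial.not_finite

namespace LieAlgebra.LieCharacter

variable {R L : Type*} [CommRing R] [LieRing L] [LieAlgebra R L]

def ofDualAbelianization
    (χ : (L ⧸ LieSubmodule.toSubmodule (⁅(⊤ : LieIdeal R L), ⊤⁆ : LieIdeal R L)) →ₗ[R] R) :
    LieCharacter R L where
  toLinearMap := χ ∘ₗ (LieSubmodule.toSubmodule (⁅(⊤ : LieIdeal R L), ⊤⁆ : LieIdeal R L)).mkQ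
  map_lie' {x y} := by
    have hxy : ⁅x, y⁆ ∈ (⁅(⊤ : LieIdeal R L), ⊤⁆ : LieIdeal R L) :=
      LieSubmodule.lie_mem_lie (LieSubmodule.mem_top x) (LieSubmodule.mem_top y)
    simp [(Submodule.Quotient.mk_eq_zero _).mpr hxy, Ring.lie_def, mul_comm]

theorem ofDualAbelianization_ne_zero
    {χ : (L ⧸ LieSubmodule.toSubmodule (⁅(⊤ : LieIdeal R L), ⊤⁆ : LieIdeal R L)) →ₗ[R] R}
    (hχ : χ ≠ 0) : ofDualAbelianization χ ≠ 0 := fun h =>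
  hχ <| Submodule.linearMap_qext _ <| congrArg LieHom.toLinearMap h

end LieAlgebra.LieCharacter

namespace FreeLieAlgebra

variable {K ι : Type*} [Field K]

noncomputable def kerSeq (ψ : LieCharacter K (FreeLieAlgebra K ι)) (j k : ι) :
    ℕ → FreeLieAlgebra K ι
  | 0 => ψ (of K j) • of K k - ψ (of K k) • of K j
  | n + 1 => ⁅of K j, kerSeq ψ j k n⁆

theorem character_kerSeq_eq_zero (ψ : LieCharacter K (FreeLieAlgebra K ι)) (j k : ι) (n : ℕ) :
    ψ (kerSeq ψ j k n) = 0 := by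
  cases n with
  | zero => simp [kerSeq, mul_comm]
  | succ n => exact lieCharacter_apply_lie ..

variable [DecidableEq ι]

noncomputable def toAffine (ψ : LieCharacter K (FreeLieAlgebra K ι)) (k : ι) :
    FreeLieAlgebra K ι →ₗ⁅K⁆ Matrix (Fin 2) (Fin 2) K[X] :=
  lift K fun i => !![ψ (of K i) • X, if i = k then 1 else 0; 0, 0]

theorem exists_toAffine_eq (ψ : LieCharacter K (FreeLieAlgebra K ι)) (k : ι)
    (z : FreeLieAlgebra K ι) : ∃ p, toAffine ψ k z = !![ψ z • X, p; 0, 0] := by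
  have hz : z ∈ lieSpan K _ (Set.range (of K)) := lieSpan_range_of K ι ▸ LieSubalgebra.mem_top z
  induction hz using lieSpan_induction with
  | mem _ h =>
    obtain ⟨i, rfl⟩ := h
    exact ⟨_, lift_of_apply _ _⟩
  | zero => exact ⟨0, by ext i j; fin_cases i <;> fin_cases j <;> simp⟩
  | add x y _ _ hx hy =>
    obtain ⟨p, hp⟩ := hx
    obtain ⟨q, hq⟩ := hy
    exact ⟨p + q, by simp [hp, hq, add_smul]⟩
  | smul a x _ hx =>
    obtain ⟨p, hp⟩ := hx
    exact ⟨a • p, by simp [hp, smul_smul]⟩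
  | lie x y _ _ hx hy =>
    obtain ⟨p, hp⟩ := hx
    obtain ⟨q, hq⟩ := hy
    refine ⟨ψ x • X * q - ψ y • X * p, ?_⟩
    rw [LieHom.map_lie, hp, hq, Matrix.lie_fin_two_of_row_one_eq_zero, lieCharacter_apply_lie,
      zero_smul]

theorem toAffine_kerSeq (ψ : LieCharacter K (FreeLieAlgebra K ι)) {j k : ι} (hjk : j ≠ k)
    (n : ℕ) : toAffine ψ k (kerSeq ψ j k n) = !![0, ψ (of K j) ^ (n + 1) • X ^ n; 0, 0] := by
  induction n with
  | zero =>
    rw [kerSeq, map_sub, map_smul, map_smul, toAffine, lift_of_apply, lift_of_apply, if_pos rfl,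
      if_neg hjk]
    refine Matrix.ext fun a b => ?_
    fin_cases a <;> fin_cases b <;> simp [smul_comm (ψ (of K j))]
  | succ n ih =>
    rw [kerSeq, LieHom.map_lie, ih, toAffine, lift_of_apply, if_neg hjk,
      Matrix.lie_fin_two_of_row_one_eq_zero, mul_zero, sub_zero, smul_mul_smul_comm, ← pow_succ',
      ← pow_succ']

theorem not_lieSpan_finite_eq_ker [Nontrivial ι] {ψ : LieCharacter K (FreeLieAlgebra K ι)}
    (hψ : ψ ≠ 0) {s : Set (FreeLieAlgebra K ι)} (hs : s.Finite) :
    (lieSpan K _ s : Set (FreeLieAlgebra K ι)) ≠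
      LinearMap.ker (ψ : FreeLieAlgebra K ι →ₗ[K] K) := by
  intro hspan
  have hmem (z) : z ∈ lieSpan K _ s ↔ ψ z = 0 := Set.ext_iff.mp hspan z
  obtain ⟨j, hj⟩ : ∃ j, ψ (of K j) ≠ 0 := by
    by_contra! h
    exact hψ (hom_ext fun i => by simpa using h i)
  obtain ⟨k, hkj⟩ := exists_ne j
  set Φ := toAffine ψ k
  have hcomm : ∀ x ∈ s, ∀ y ∈ s, ⁅Φ x, Φ y⁆ = 0 := by
    intro x hx y hy
    obtain ⟨p, hp⟩ := exists_toAffine_eq ψ k x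
    obtain ⟨q, hq⟩ := exists_toAffine_eq ψ k y
    rw [hp, hq, (hmem x).mp (subset_lieSpan hx), (hmem y).mp (subset_lieSpan hy)]
    ext a b; fin_cases a <;> fin_cases b <;> simp [Ring.lie_def]
  let W := (Submodule.span K (Φ '' s)).map (entryLinearMap K K[X] 0 1)
  refine Polynomial.not_fg_of_forall_X_pow_mem (W := W) (fun n => ?_)
    ((Submodule.fg_span (hs.image Φ)).map _)
  have hΦ : Φ (kerSeq ψ j k n) ∈ Submodule.span K (Φ '' s) :=
    Φ.image_lieSpan_subset_span hcomm ⟨_, (hmem _).mpr (character_kerSeq_eq_zero ψ j k n), rfl⟩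
  have hW := Submodule.mem_map_of_mem (f := entryLinearMap K K[X] 0 1) hΦ
  rw [toAffine_kerSeq ψ hkj.symm] at hW
  exact (W.smul_mem_iff (pow_ne_zero _ hj)).mp hW

end FreeLieAlgebra

/-- Let `K` be a field and `F` the free Lie algebra over `K` on `m ≥ 2`
generators.  For any nonzero `K`-linear map `χ : F/[F,F] → K`, the ideal
`I_χ = π⁻¹(ker χ)` is not finitely generated as a Lie algebra. -/
theorem statement12 (K : Type u) [Field K] (m : ℕ) (hm : 2 ≤ m)
    (χ : (FreeLieAlgebra K (Fin m) ⧸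
        LieSubmodule.toSubmodule (⁅(⊤ : LieIdeal K (FreeLieAlgebra K (Fin m))),
          (⊤ : LieIdeal K (FreeLieAlgebra K (Fin m)))⁆ :
          LieIdeal K (FreeLieAlgebra K (Fin m)))) →ₗ[K] K)
    (hχ : χ ≠ 0) :
    ¬ ∃ s : Set (FreeLieAlgebra K (Fin m)), s.Finite ∧
      ((LieSubalgebra.lieSpan K (FreeLieAlgebra K (Fin m)) s : Set (FreeLieAlgebra K (Fin m)))
        = (LinearMap.ker (χ ∘ₗ
            (LieSubmodule.toSubmodule (⁅(⊤ : LieIdeal K (FreeLieAlgebra K (Fin m))),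
              (⊤ : LieIdeal K (FreeLieAlgebra K (Fin m)))⁆ :
              LieIdeal K (FreeLieAlgebra K (Fin m)))).mkQ) :
          Set (FreeLieAlgebra K (Fin m)))) := by
  have : Nontrivial (Fin m) := Fin.nontrivial_iff_two_le.mpr hm
  rintro ⟨s, hs, hspan⟩
  exact FreeLieAlgebra.not_lieSpan_finite_eq_ker
    (LieAlgebra.LieCharacter.ofDualAbelianization_ne_zero hχ) hs hspan
end

section
/- Let Γ be a finite simple graph, L_Γ the associated right-angled Artin Lie algebra over a field K (generated by V(Γ) with relations [v,w] = 0 for edges {v,w}), and χ a nonzero linear character on L_Γ/[L_Γ,L_Γ] with living subgraph Γ_χ (spanned by vertices with nonzero χ-value). If Γ_χ is connected and dominant in Γ, then the ideal I_χ = π⁻¹(ker χ) is generated as a Lie algebra by the kernel of χ restricted to the span of V(Γ); in particular I_χ is finitely generated. -/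
/-!
Write `x v` for the image of the vertex `v` and `c v = χ (x v)`. The kernel of `χ` on the
span of the vertices is spanned by the dead vertices and by the elements `x a - (c a / c b) • x b`
along edges with `c b ≠ 0`: walking along paths of the connected living subgraph reaches every
living vertex from a fixed living vertex `v₀`. Each such generator commutes with some `x w` with
`c w ≠ 0` (dominance for the dead vertices), and `x v₀` differs from a multiple of `x w` by an
element of the kernel, so `x v₀` normalises the Lie subalgebra `H` they generate. Hence
`H + K x v₀` is a Lie subalgebra containing all vertices, i.e. everything, and `H = ker χ`
because `χ (x v₀) ≠ 0`.
-/

attribute [local instance 100] LieRing.ofAssociativeRing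

open Set Submodule

theorem Submodule.inf_ker_le_of_le_sup_span_singleton {K M : Type*} [DivisionRing K]
    [AddCommGroup M] [Module K M] {P Q : Submodule K M} {φ : M →ₗ[K] K} {y : M}
    (hQ : Q ≤ P ⊔ K ∙ y) (hP : P ≤ LinearMap.ker φ) (hy : φ y ≠ 0) :
    Q ⊓ LinearMap.ker φ ≤ P := by
  rintro z ⟨hzQ, hz⟩
  obtain ⟨p, hp, _, hay, rfl⟩ := mem_sup.1 (hQ hzQ)
  obtain ⟨a, rfl⟩ := mem_span_singleton.1 hay
  have ha : a * φ y = 0 := by simpa [LinearMap.mem_ker.1 (hP hp)] using hz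
  rw [(mul_eq_zero.1 ha).resolve_right hy, zero_smul, add_zero]
  exact hp

section KernelGenerators

variable {K M V : Type*} [Field K] [AddCommGroup M] [Module K M]
  (G : SimpleGraph V) (x : V → M) (c : V → K)

def kernelGenerators : Set M :=
  x '' {w | c w = 0} ∪
    (fun p : V × V => x p.1 - (c p.1 / c p.2) • x p.2) '' {p | c p.2 ≠ 0 ∧ G.Adj p.1 p.2}

theorem kernelGenerators_finite [Finite V] : (kernelGenerators G x c).Finite :=
  ((toFinite _).image _).union ((toFinite _).image _)

variable {G x c}

theorem sub_div_smul_mem_span_inf_ker {φ : M →ₗ[K] K} (hφ : ∀ v, φ (x v) = c v) (v : V)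
    {w : V} (hw : c w ≠ 0) :
    x v - (c v / c w) • x w ∈ span K (range x) ⊓ LinearMap.ker φ :=
  ⟨sub_mem (subset_span (mem_range_self v)) (smul_mem _ _ (subset_span (mem_range_self w))),
    by simp [hφ, div_mul_cancel₀ _ hw]⟩

theorem kernelGenerators_subset {φ : M →ₗ[K] K} (hφ : ∀ v, φ (x v) = c v) :
    kernelGenerators G x c ⊆ span K (range x) ⊓ LinearMap.ker φ := by
  rintro _ (⟨w, hw, rfl⟩ | ⟨⟨a, b⟩, ⟨hb, -⟩, rfl⟩)
  · exact ⟨subset_span (mem_range_self w), by simpa [hφ] using hw⟩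
  · exact sub_div_smul_mem_span_inf_ker hφ a hb

theorem inv_smul_sub_inv_smul_mem_span_kernelGenerators
    (hconn : (G.induce {v | c v ≠ 0}).Preconnected) (a b : {v | c v ≠ 0}) :
    (c a)⁻¹ • x a - (c b)⁻¹ • x b ∈ span K (kernelGenerators G x c) := by
  obtain ⟨p⟩ := hconn a b
  induction p with
  | nil => simp
  | @cons u w b hadj p ih =>
    have hedge : x u - (c u / c w) • x w ∈ span K (kernelGenerators G x c) :=
      subset_span (Or.inr ⟨(u, w), ⟨w.2, hadj⟩, rfl⟩)
    have hsplit : (c u)⁻¹ • x u - (c b)⁻¹ • x b =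
        (c u)⁻¹ • (x u - (c u / c w) • x w) + ((c w)⁻¹ • x w - (c b)⁻¹ • x b) := by
      rw [smul_sub, smul_smul, div_eq_mul_inv, inv_mul_cancel_left₀ u.2]
      abel
    rw [hsplit]
    exact add_mem (smul_mem _ _ hedge) ih

theorem mem_span_kernelGenerators_sup (hconn : (G.induce {v | c v ≠ 0}).Preconnected)
    {v₀ : V} (hv₀ : c v₀ ≠ 0) (v : V) :
    x v ∈ span K (kernelGenerators G x c) ⊔ K ∙ x v₀ := by
  by_cases hv : c v = 0
  · exact mem_sup_left (subset_span (Or.inl ⟨v, hv, rfl⟩))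
  · have hdiff :=
      inv_smul_sub_inv_smul_mem_span_kernelGenerators (x := x) hconn ⟨v, hv⟩ ⟨v₀, hv₀⟩
    have hsplit : x v = c v • ((c v)⁻¹ • x v - (c v₀)⁻¹ • x v₀) + (c v * (c v₀)⁻¹) • x v₀ := by
      rw [smul_sub, smul_smul, smul_smul, mul_inv_cancel₀ hv, one_smul, sub_add_cancel]
    rw [hsplit]
    exact add_mem (mem_sup_left (smul_mem _ _ hdiff))
      (mem_sup_right (mem_span_singleton.2 ⟨_, rfl⟩))

theorem span_kernelGenerators {φ : M →ₗ[K] K} (hφ : ∀ v, φ (x v) = c v)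
    (hconn : (G.induce {v | c v ≠ 0}).Connected) :
    span K (kernelGenerators G x c) = span K (range x) ⊓ LinearMap.ker φ := by
  obtain ⟨⟨v₀, hv₀⟩⟩ := hconn.nonempty
  refine le_antisymm (span_le.2 (kernelGenerators_subset hφ)) ?_
  refine inf_ker_le_of_le_sup_span_singleton ?_ ?_ (by rwa [hφ])
  · exact span_le.2 (range_subset_iff.2 (mem_span_kernelGenerators_sup hconn.preconnected hv₀))
  · exact span_le.2 fun e he => (kernelGenerators_subset hφ he).2

end KernelGenerators

theorem LieSubalgebra.mem_normalizer_lieSpan_iff {R L : Type*} [CommRing R] [LieRing L]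
    [LieAlgebra R L] {s : Set L} {y : L} :
    y ∈ (lieSpan R L s).normalizer ↔ ∀ u ∈ s, ⁅y, u⁆ ∈ lieSpan R L s := by
  refine ⟨fun hy u hu => ideal_in_normalizer hy (subset_lieSpan hu), fun h => ?_⟩
  rw [mem_normalizer_iff]
  intro z hz
  induction hz using lieSpan_induction with
  | mem u hu => exact h u hu
  | zero => simp
  | add u v _ _ ihu ihv => rw [lie_add]; exact add_mem ihu ihv
  | smul t u _ ihu => rw [lie_smul]; exact smul_mem _ t ihu
  | lie u v hu hv ihu ihv =>
    rw [leibniz_lie]; exact add_mem (lie_mem _ ihu hv) (lie_mem _ hu ihv)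

theorem LieSubalgebra.span_singleton_sup_eq_top_of_mem_normalizer {R L : Type*} [CommRing R]
    [LieRing L] [LieAlgebra R L] {H : LieSubalgebra R L} {y : L} {s : Set L}
    (hy : y ∈ H.normalizer) (hs : lieSpan R L s = ⊤)
    (hsH : s ⊆ (R ∙ y ⊔ H.toSubmodule : Submodule R L)) :
    R ∙ y ⊔ H.toSubmodule = ⊤ := by
  let S : LieSubalgebra R L :=
    { R ∙ y ⊔ H.toSubmodule with lie_mem' := lie_mem_sup_of_mem_normalizer hy }
  have hS : lieSpan R L s ≤ S := lieSpan_le.2 hsH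
  rw [hs, top_le_iff] at hS
  exact congrArg toSubmodule hS

theorem LieSubalgebra.lieSpan_span {R L : Type*} [CommRing R] [LieRing L] [LieAlgebra R L]
    (s : Set L) : lieSpan R L (span R s : Set L) = lieSpan R L s :=
  le_antisymm (lieSpan_le.2 submodule_span_le_lieSpan) (lieSpan_mono subset_span)

theorem FreeLieAlgebra.lieSpan_range_comp_eq_top_of_surjective {R X L : Type*} [CommRing R]
    [LieRing L] [LieAlgebra R L] {π : FreeLieAlgebra R X →ₗ⁅R⁆ L} (hπ : Function.Surjective π) :
    LieSubalgebra.lieSpan R L (range (π ∘ of R)) = ⊤ := by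
  set S := LieSubalgebra.lieSpan R L (range (π ∘ of R))
  let f : FreeLieAlgebra R X →ₗ⁅R⁆ S :=
    lift R fun v => ⟨π (of R v), LieSubalgebra.subset_lieSpan (mem_range_self v)⟩
  have hf : S.incl.comp f = π := hom_ext fun v => by simp [f]
  rw [eq_top_iff]
  intro y _
  obtain ⟨z, rfl⟩ := hπ y
  rw [← hf]
  exact (f z).2

section LieKernel

variable {K V L : Type*} [Field K] [LieRing L] [LieAlgebra K L]
  {G : SimpleGraph V} {x : V → L} {c : V → K}

theorem exists_lie_eq_zero_of_mem_kernelGenerators (hrel : ∀ v w, G.Adj v w → ⁅x v, x w⁆ = 0)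
    (hdom : ∀ v, c v = 0 → ∃ w, c w ≠ 0 ∧ G.Adj v w) {e : L}
    (he : e ∈ kernelGenerators G x c) : ∃ w, c w ≠ 0 ∧ ⁅x w, e⁆ = 0 := by
  rcases he with ⟨v, hv, rfl⟩ | ⟨⟨a, b⟩, ⟨hb, hab⟩, rfl⟩
  · obtain ⟨w, hw, hvw⟩ := hdom v hv
    exact ⟨w, hw, hrel w v hvw.symm⟩
  · refine ⟨b, hb, ?_⟩
    rw [lie_sub, lie_smul, lie_self, smul_zero, sub_zero, ← lie_skew, hrel a b hab, neg_zero]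

theorem lieSpan_kernelGenerators_eq_ker {χ : L →ₗ⁅K⁆ K}
    (hgen : LieSubalgebra.lieSpan K L (range x) = ⊤) (hχ : ∀ v, χ (x v) = c v)
    (hrel : ∀ v w, G.Adj v w → ⁅x v, x w⁆ = 0) (hconn : (G.induce {v | c v ≠ 0}).Connected)
    (hdom : ∀ v, c v = 0 → ∃ w, c w ≠ 0 ∧ G.Adj v w) :
    (LieSubalgebra.lieSpan K L (kernelGenerators G x c) : Set L) = χ.ker := by
  set H := LieSubalgebra.lieSpan K L (kernelGenerators G x c)
  obtain ⟨⟨v₀, hv₀⟩⟩ := hconn.nonempty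
  have hspan := span_kernelGenerators (φ := χ.toLinearMap) hχ hconn
  have hspanH : span K (kernelGenerators G x c) ≤ H.toSubmodule :=
    LieSubalgebra.submodule_span_le_lieSpan
  have hHker : H ≤ χ.ker.toLieSubalgebra :=
    LieSubalgebra.lieSpan_le.2 fun e he => (kernelGenerators_subset hχ he).2
  have hnorm : x v₀ ∈ H.normalizer := by
    refine LieSubalgebra.mem_normalizer_lieSpan_iff.2 fun e he => ?_
    obtain ⟨w, hw, hwe⟩ := exists_lie_eq_zero_of_mem_kernelGenerators hrel hdom he
    have hdiff : x v₀ - (c v₀ / c w) • x w ∈ H :=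
      hspanH (hspan ▸ sub_div_smul_mem_span_inf_ker hχ v₀ hw)
    have hsplit : ⁅x v₀, e⁆ = ⁅x v₀ - (c v₀ / c w) • x w, e⁆ + (c v₀ / c w) • ⁅x w, e⁆ := by
      rw [sub_lie, smul_lie, sub_add_cancel]
    rw [hsplit, hwe, smul_zero, add_zero]
    exact H.lie_mem hdiff (LieSubalgebra.subset_lieSpan he)
  have htop : K ∙ x v₀ ⊔ H.toSubmodule = ⊤ := by
    refine LieSubalgebra.span_singleton_sup_eq_top_of_mem_normalizer hnorm hgen ?_
    refine range_subset_iff.2 fun v => ?_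
    rw [sup_comm]
    exact sup_le_sup_right hspanH _ (mem_span_kernelGenerators_sup hconn.preconnected hv₀ v)
  have hkerH : LinearMap.ker χ.toLinearMap ≤ H.toSubmodule := by
    simpa using inf_ker_le_of_le_sup_span_singleton (Q := ⊤) (φ := χ.toLinearMap)
      (by rw [sup_comm, htop]) hHker (by rwa [LieHom.coe_toLinearMap, hχ])
  ext y
  exact ⟨fun hy => hHker hy, fun hy => hkerH hy⟩

end LieKernel

theorem statement13_general (K : Type) [Field K] (V : Type) [Fintype V]
    (G : SimpleGraph V)
    (LΓ : Type) [LieRing LΓ] [LieAlgebra K LΓ]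
    (π : FreeLieAlgebra K V →ₗ⁅K⁆ LΓ) (hπ : Function.Surjective π)
    (hker : π.ker = LieSubmodule.lieSpan K (FreeLieAlgebra K V)
      {x | ∃ v w : V, G.Adj v w ∧ x = ⁅FreeLieAlgebra.of K v, FreeLieAlgebra.of K w⁆})
    (c : V → K)
    (χ : LΓ →ₗ⁅K⁆ K) (hχ : ∀ v : V, χ (π (FreeLieAlgebra.of K v)) = c v)
    (hconn : (G.induce {v : V | c v ≠ 0}).Connected)
    (hdom : ∀ v : V, c v = 0 → ∃ w : V, c w ≠ 0 ∧ G.Adj v w) :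
    ((LieSubalgebra.lieSpan K LΓ
        (((Submodule.map π.toLinearMap
            (Submodule.span K (Set.range (fun v : V => FreeLieAlgebra.of K v))))
          ⊓ LinearMap.ker (χ : LΓ →ₗ⁅K⁆ K).toLinearMap : Submodule K LΓ) : Set LΓ)
        : Set LΓ) = (χ.ker : Set LΓ))
    ∧ ∃ s : Set LΓ, s.Finite ∧
      ((LieSubalgebra.lieSpan K LΓ s : Set LΓ) = (χ.ker : Set LΓ)) := by
  set x : V → LΓ := fun v => π (FreeLieAlgebra.of K v)
  have hrel : ∀ v w, G.Adj v w → ⁅x v, x w⁆ = 0 := fun v w hvw => by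
    have hmem : ⁅FreeLieAlgebra.of K v, FreeLieAlgebra.of K w⁆ ∈ π.ker :=
      hker ▸ LieSubmodule.subset_lieSpan ⟨v, w, hvw, rfl⟩
    simpa [x] using hmem
  have hE := lieSpan_kernelGenerators_eq_ker
    (FreeLieAlgebra.lieSpan_range_comp_eq_top_of_surjective hπ) hχ hrel hconn hdom
  have hU : Submodule.map π.toLinearMap (span K (range (FreeLieAlgebra.of K)))
      ⊓ LinearMap.ker χ.toLinearMap = span K (kernelGenerators G x c) := by
    rw [span_kernelGenerators hχ hconn, Submodule.map_span, ← range_comp]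
    rfl
  refine ⟨?_, _, kernelGenerators_finite G x c, hE⟩
  rw [hU, LieSubalgebra.lieSpan_span]
  exact hE

/-- Let `Γ` be a finite simple graph and `LΓ` the right-angled Artin Lie
algebra over a field `K` on `Γ` (presented by a surjection `π` from the free Lie algebra on
the vertices whose kernel is the ideal generated by the brackets of adjacent vertices).
Let `χ` be a nonzero character, given by vertex values `c : V → K`.  If the living subgraph
`Γ_χ` is connected and dominant in `Γ`, then the ideal `I_χ = ker χ` is generated as a Lie
algebra by the kernel of `χ` restricted to the (image of the) span of the vertices; in
particular `I_χ` is finitely generated as a Lie algebra. -/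
theorem statement13 (K : Type) [Field K] (V : Type) [Fintype V] [DecidableEq V]
    (G : SimpleGraph V)
    (LΓ : Type) [LieRing LΓ] [LieAlgebra K LΓ]
    (π : FreeLieAlgebra K V →ₗ⁅K⁆ LΓ) (hπ : Function.Surjective π)
    (hker : π.ker = LieSubmodule.lieSpan K (FreeLieAlgebra K V)
      {x | ∃ v w : V, G.Adj v w ∧ x = ⁅FreeLieAlgebra.of K v, FreeLieAlgebra.of K w⁆})
    (c : V → K) (hc : c ≠ 0)
    (χ : LΓ →ₗ⁅K⁆ K) (hχ : ∀ v : V, χ (π (FreeLieAlgebra.of K v)) = c v)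
    (hconn : (G.induce {v : V | c v ≠ 0}).Connected)
    (hdom : ∀ v : V, c v = 0 → ∃ w : V, c w ≠ 0 ∧ G.Adj v w) :
    ((LieSubalgebra.lieSpan K LΓ
        (((Submodule.map π.toLinearMap
            (Submodule.span K (Set.range (fun v : V => FreeLieAlgebra.of K v))))
          ⊓ LinearMap.ker (χ : LΓ →ₗ⁅K⁆ K).toLinearMap : Submodule K LΓ) : Set LΓ)
        : Set LΓ) = (χ.ker : Set LΓ))
    ∧ ∃ s : Set LΓ, s.Finite ∧
      ((LieSubalgebra.lieSpan K LΓ s : Set LΓ) = (χ.ker : Set LΓ)) :=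
  statement13_general K V G LΓ π hπ hker c χ hχ hconn hdom
end

section
/- Let Γ be a finite simple graph and χ a character whose living subgraph Γ_χ is connected but not dominant in Γ. Then the ideal I_χ of L_Γ is not finitely generated as a Lie algebra. -/
attribute [local instance 100] LieRing.ofAssociativeRing

/-!
A character `χ` of `L_Γ` and a vertex `v₀` outside `Γ_χ` with no neighbour in `Γ_χ` define a
homomorphism `ψ` from `L_Γ` to the semidirect product `K[X] ⋊ K`, in which `K` acts on the
abelian ideal `K[X]` by multiplication by `X`: send `v₀` to `1 ∈ K[X]` and every other vertex `v`
to `χ v ∈ K`. The right-hand coordinate of `ψ` is `χ`, so `ψ` maps `I_χ` into the abelian ideal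
`K[X]`, and a Lie subalgebra generated by a finite subset of `I_χ` is mapped into a
finite-dimensional subspace. But `ad(w₀)ⁿ v₀ ∈ I_χ` is mapped to `χ(w₀)ⁿ Xⁿ` for a vertex `w₀`
with `χ(w₀) ≠ 0`, and these span `K[X]`.
-/

open LieAlgebra Polynomial

namespace LieHom

variable {R L L' M : Type*} [CommRing R] [LieRing L] [LieAlgebra R L] [LieRing L']
  [LieAlgebra R L'] [LieRing M] [LieAlgebra R M]

theorem map_ad_pow (f : L →ₗ⁅R⁆ M) (x y : L) (n : ℕ) :
    f ((ad R L x ^ n) y) = (ad R M (f x) ^ n) (f y) := by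
  induction n with
  | zero => rfl
  | succ n ih => rw [pow_succ', Module.End.mul_apply, ad_apply, map_lie, ih, pow_succ',
      Module.End.mul_apply, ad_apply]

theorem apply_eq_apply_of_ker_le {π : L →ₗ⁅R⁆ L'} {f : L →ₗ⁅R⁆ M} (hf : π.ker ≤ f.ker)
    {a b : L} (h : π a = π b) : f a = f b := by
  rw [← sub_eq_zero, ← map_sub, ← mem_ker]
  exact hf (by rw [mem_ker, map_sub, h, sub_self])

noncomputable def liftOfSurjective (π : L →ₗ⁅R⁆ L') (hπ : Function.Surjective π)
    (f : L →ₗ⁅R⁆ M) (hf : π.ker ≤ f.ker) : L' →ₗ⁅R⁆ M where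
  toFun y := f (Function.surjInv hπ y)
  map_add' x y := by
    rw [← map_add]
    exact apply_eq_apply_of_ker_le hf (by simp only [map_add, Function.surjInv_eq])
  map_smul' t x := by
    rw [RingHom.id_apply, ← map_smul]
    exact apply_eq_apply_of_ker_le hf (by simp only [map_smul, Function.surjInv_eq])
  map_lie' {x y} := by
    rw [← map_lie]
    exact apply_eq_apply_of_ker_le hf (by simp only [map_lie, Function.surjInv_eq])

theorem liftOfSurjective_apply {π : L →ₗ⁅R⁆ L'} (hπ : Function.Surjective π)
    {f : L →ₗ⁅R⁆ M} (hf : π.ker ≤ f.ker) (x : L) : π.liftOfSurjective hπ f hf (π x) = f x :=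
  apply_eq_apply_of_ker_le hf (Function.surjInv_eq hπ _)

theorem image_lieSpan_subset_span_s15 (f : L →ₗ⁅R⁆ M) {s : Set L}
    (hs : ∀ x ∈ s, ∀ y ∈ s, ⁅f x, f y⁆ = 0) :
    f '' LieSubalgebra.lieSpan R L s ⊆ Submodule.span R (f '' s) := by
  rintro _ ⟨x, hx, rfl⟩
  have hmap : f x ∈ (LieSubalgebra.lieSpan R L s).map f :=
    (LieSubalgebra.mem_map _ _ _).mpr ⟨x, hx, rfl⟩
  rw [LieSubalgebra.map_lieSpan, ← LieSubalgebra.mem_toSubmodule,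
    LieSubalgebra.coe_lieSpan_eq_span_of_forall_lie_eq_zero] at hmap
  · exact hmap
  · rintro _ ⟨x, hx, rfl⟩ _ ⟨y, hy, rfl⟩
    exact hs x hx y hy

variable (R) in
def toSpanSingleton (x : L) : R →ₗ⁅R⁆ L where
  __ := LinearMap.toSpanSingleton R L x
  map_lie' {s t} := by simp [LieRing.of_associative_ring_bracket, mul_comm, smul_lie, lie_smul]

end LieHom

theorem FreeLieAlgebra.hom_ext_of_surjective {R X L M : Type*} [CommRing R] [LieRing L]
    [LieAlgebra R L] [LieRing M] [LieAlgebra R M] {π : FreeLieAlgebra R X →ₗ⁅R⁆ L}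
    (hπ : Function.Surjective π) {f g : L →ₗ⁅R⁆ M}
    (h : ∀ x, f (π (FreeLieAlgebra.of R x)) = g (π (FreeLieAlgebra.of R x))) : f = g := by
  have hcomp : f.comp π = g.comp π := FreeLieAlgebra.hom_ext h
  ext y
  obtain ⟨a, rfl⟩ := hπ y
  exact LieHom.congr_fun hcomp a

section RightAngledArtin

variable {K V LΓ M : Type*} [CommRing K] [LieRing LΓ] [LieAlgebra K LΓ] [LieRing M]
  [LieAlgebra K M] {G : SimpleGraph V} {π : FreeLieAlgebra K V →ₗ⁅K⁆ LΓ}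
  (hπ : Function.Surjective π)
  (hker : π.ker ≤ LieSubmodule.lieSpan K (FreeLieAlgebra K V)
    {x | ∃ v w : V, G.Adj v w ∧ x = ⁅FreeLieAlgebra.of K v, FreeLieAlgebra.of K w⁆})

/-- The universal property of the right-angled Artin Lie algebra presented by `π`. -/
noncomputable def raagLift (f : V → M) (hf : ∀ v w, G.Adj v w → ⁅f v, f w⁆ = 0) :
    LΓ →ₗ⁅K⁆ M :=
  π.liftOfSurjective hπ (FreeLieAlgebra.lift K f) <| hker.trans <| by
    rw [LieSubmodule.lieSpan_le]
    rintro _ ⟨v, w, hvw, rfl⟩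
    simp [hf v w hvw]

theorem raagLift_apply_of (f : V → M) (hf : ∀ v w, G.Adj v w → ⁅f v, f w⁆ = 0) (v : V) :
    raagLift hπ hker f hf (π (FreeLieAlgebra.of K v)) = f v := by
  rw [raagLift, LieHom.liftOfSurjective_apply, FreeLieAlgebra.lift_of_apply]

end RightAngledArtin

def LieDerivation.ofIsLieAbelian {R L : Type*} [CommRing R] [LieRing L] [LieAlgebra R L]
    [IsLieAbelian L] (f : L →ₗ[R] L) : LieDerivation R L L where
  toLinearMap := f
  leibniz' a b := by simp only [trivial_lie_zero, map_zero, sub_self]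

section PolyExt

variable (R : Type*) [CommRing R]

noncomputable def mulXAction : R →ₗ⁅R⁆ LieDerivation R R[X] R[X] :=
  haveI : IsLieAbelian R[X] := isMulCommutative_iff_isLieAbelian.mp inferInstance
  LieHom.toSpanSingleton R (LieDerivation.ofIsLieAbelian (LinearMap.mulLeft R X))

/-- The semidirect product `R[X] ⋊ R`, where `R` acts on the abelian ideal `R[X]` by
multiplication by `X`. -/
abbrev PolyExt := R[X] ⋊⁅mulXAction R⁆ R

variable {R}

@[simp] theorem mulXAction_apply (a : R) (p : R[X]) : mulXAction R a p = a • (X * p) := rfl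

theorem PolyExt.lie_mk (p q : R[X]) (a b : R) :
    ⁅(⟨p, a⟩ : PolyExt R), (⟨q, b⟩ : PolyExt R)⁆ = ⟨a • (X * q) - b • (X * p), 0⟩ := by
  rw [SemiDirectSum.lie_eq_mk]
  simp [LieRing.of_associative_ring_bracket, mul_comm]

theorem PolyExt.ad_pow_apply (a : R) (n : ℕ) (p : R[X]) :
    (ad R (PolyExt R) ⟨0, a⟩ ^ n) (⟨p, 0⟩ : PolyExt R) = ⟨a ^ n • (X ^ n * p), 0⟩ := by
  induction n with
  | zero => simp
  | succ n ih =>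
    rw [pow_succ', Module.End.mul_apply, ih, ad_apply, lie_mk, zero_smul, sub_zero,
      mul_smul_comm, smul_smul, ← mul_assoc, ← pow_succ', ← pow_succ']

end PolyExt

theorem Polynomial.submodule_eq_top_of_X_pow_mem {R : Type*} [CommSemiring R]
    {W : Submodule R R[X]} (h : ∀ n, (X : R[X]) ^ n ∈ W) : W = ⊤ :=
  eq_top_iff.mpr fun p _ => p.induction_on' (fun _ _ => W.add_mem) fun n a => by
    rw [← smul_X_eq_monomial]
    exact W.smul_mem a (h n)

theorem not_exists_finite_lieSpan_eq_ker {K L : Type*} [Field K] [LieRing L] [LieAlgebra K L]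
    (χ : L →ₗ⁅K⁆ K) (ψ : L →ₗ⁅K⁆ PolyExt K) (hψ : ∀ x, (ψ x).right = χ x)
    {x y : L} {a : K} (ha : a ≠ 0) (hx : ψ x = ⟨0, a⟩) (hy : ψ y = ⟨1, 0⟩) :
    ¬ ∃ s : Set L, s.Finite ∧ (LieSubalgebra.lieSpan K L s : Set L) = χ.ker := by
  rintro ⟨s, hs_fin, hs_span⟩
  have hs_ker : ∀ z ∈ s, (ψ z).right = 0 := fun z hz => by
    rw [hψ, ← LieHom.mem_ker, ← LieSubmodule.mem_coe, ← hs_span]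
    exact LieSubalgebra.subset_lieSpan hz
  have hs_comm : ∀ z ∈ s, ∀ w ∈ s, ⁅ψ z, ψ w⁆ = 0 := fun z hz w hw => by
    rw [show ψ z = ⟨(ψ z).left, 0⟩ from SemiDirectSum.ext rfl (hs_ker z hz),
      show ψ w = ⟨(ψ w).left, 0⟩ from SemiDirectSum.ext rfl (hs_ker w hw), PolyExt.lie_mk]
    simp
  set W := Submodule.span K (SemiDirectSum.projl (mulXAction K) '' (ψ '' s))
  have hX : ∀ n, (X : K[X]) ^ n ∈ W := by
    intro n
    have hmem : (ad K L x ^ n) y ∈ (LieSubalgebra.lieSpan K L s : Set L) := by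
      rw [hs_span, LieSubmodule.mem_coe, LieHom.mem_ker, LieHom.map_ad_pow, ← hψ y, hy, map_zero]
    have hspan := LieHom.image_lieSpan_subset_span_s15 ψ hs_comm ⟨_, hmem, rfl⟩
    rw [LieHom.map_ad_pow, hx, hy, PolyExt.ad_pow_apply, mul_one] at hspan
    have hproj := Submodule.mem_map_of_mem (f := SemiDirectSum.projl (mulXAction K)) hspan
    rw [← Submodule.span_image, SemiDirectSum.projl_mk] at hproj
    exact (W.smul_mem_iff (pow_ne_zero n ha)).mp hproj
  have hW_fg : W.FG := Submodule.fg_span ((hs_fin.image _).image _)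
  rw [Polynomial.submodule_eq_top_of_X_pow_mem hX] at hW_fg
  exact Polynomial.not_finite ⟨hW_fg⟩

noncomputable def PolyExt.vertexMap {R V : Type*} [CommRing R] [DecidableEq V] (c : V → R)
    (v₀ v : V) : PolyExt R :=
  ⟨if v = v₀ then 1 else 0, c v⟩

theorem PolyExt.lie_vertexMap_eq_zero {R V : Type*} [CommRing R] [DecidableEq V]
    {G : SimpleGraph V} {c : V → R} {v₀ : V} (hv₀ : c v₀ = 0)
    (hv₀_adj : ∀ w, c w ≠ 0 → ¬ G.Adj v₀ w)
    {v w : V} (hvw : G.Adj v w) : ⁅vertexMap c v₀ v, vertexMap c v₀ w⁆ = 0 := by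
  have hc_nbr : ∀ u, G.Adj v₀ u → c u = 0 := fun u hu => not_not.mp fun h => hv₀_adj u h hu
  simp only [vertexMap, lie_mk]
  split_ifs with hw hv hv
  · exact absurd (hv.trans hw.symm) (G.ne_of_adj hvw)
  · subst hw
    simp [hv₀, hc_nbr v hvw.symm]
  · subst hv
    simp [hv₀, hc_nbr w hvw]
  · simp

theorem statement15_general (K : Type) [Field K] (V : Type)
    (G : SimpleGraph V)
    (LΓ : Type) [LieRing LΓ] [LieAlgebra K LΓ]
    (π : FreeLieAlgebra K V →ₗ⁅K⁆ LΓ) (hπ : Function.Surjective π)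
    (hker : π.ker = LieSubmodule.lieSpan K (FreeLieAlgebra K V)
      {x | ∃ v w : V, G.Adj v w ∧ x = ⁅FreeLieAlgebra.of K v, FreeLieAlgebra.of K w⁆})
    (c : V → K) (hc : c ≠ 0)
    (χ : LΓ →ₗ⁅K⁆ K) (hχ : ∀ v : V, χ (π (FreeLieAlgebra.of K v)) = c v)
    (hnotdom : ∃ v : V, c v = 0 ∧ ∀ w : V, c w ≠ 0 → ¬ G.Adj v w) :
    ¬ ∃ s : Set LΓ, s.Finite ∧
      ((LieSubalgebra.lieSpan K LΓ s : Set LΓ) = (χ.ker : Set LΓ)) := by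
  classical
  obtain ⟨v₀, hv₀, hv₀_adj⟩ := hnotdom
  obtain ⟨w₀, hw₀⟩ := Function.ne_iff.mp hc
  have hw₀v₀ : w₀ ≠ v₀ := fun h => hw₀ (h ▸ hv₀)
  let ψ := raagLift hπ hker.le (PolyExt.vertexMap c v₀) fun _ _ =>
    PolyExt.lie_vertexMap_eq_zero hv₀ hv₀_adj
  have hψ : (SemiDirectSum.projr (mulXAction K)).comp ψ = χ :=
    FreeLieAlgebra.hom_ext_of_surjective hπ fun v => by
      simp [ψ, PolyExt.vertexMap, raagLift_apply_of, hχ]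
  refine not_exists_finite_lieSpan_eq_ker χ ψ (fun x => LieHom.congr_fun hψ x) hw₀
    (x := π (FreeLieAlgebra.of K w₀)) (y := π (FreeLieAlgebra.of K v₀)) ?_ ?_
  · simp [ψ, PolyExt.vertexMap, raagLift_apply_of, hw₀v₀]
  · simp [ψ, PolyExt.vertexMap, raagLift_apply_of, hv₀]

/-- Let `Γ` be a finite simple graph and `LΓ` the right-angled Artin Lie
algebra over a field `K` on `Γ` (presented by a surjection `π` from the free Lie algebra on
the vertices whose kernel is the ideal generated by the brackets of adjacent vertices).
Let `χ` be a nonzero character, given by vertex values `c : V → K`.  If the living subgraph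
`Γ_χ` is connected but not dominant in `Γ`, then the ideal `I_χ = ker χ` is not finitely
generated as a Lie algebra. -/
theorem statement15 (K : Type) [Field K] (V : Type) [Fintype V] [DecidableEq V]
    (G : SimpleGraph V)
    (LΓ : Type) [LieRing LΓ] [LieAlgebra K LΓ]
    (π : FreeLieAlgebra K V →ₗ⁅K⁆ LΓ) (hπ : Function.Surjective π)
    (hker : π.ker = LieSubmodule.lieSpan K (FreeLieAlgebra K V)
      {x | ∃ v w : V, G.Adj v w ∧ x = ⁅FreeLieAlgebra.of K v, FreeLieAlgebra.of K w⁆})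
    (c : V → K) (hc : c ≠ 0)
    (χ : LΓ →ₗ⁅K⁆ K) (hχ : ∀ v : V, χ (π (FreeLieAlgebra.of K v)) = c v)
    (hconn : (G.induce {v : V | c v ≠ 0}).Connected)
    (hnotdom : ∃ v : V, c v = 0 ∧ ∀ w : V, c w ≠ 0 → ¬ G.Adj v w) :
    ¬ ∃ s : Set LΓ, s.Finite ∧
      ((LieSubalgebra.lieSpan K LΓ s : Set LΓ) = (χ.ker : Set LΓ)) :=
  statement15_general K V G LΓ π hπ hker c hc χ hχ hnotdom
end

section
/- Let K be a field and C a chain complex …→ Cₙ → Cₙ₋₁ →…→ C₀ → 0 of finite dimensional K-vector spaces with differentials d̄. Consider the complex C ⊗_K K[v] of free K[v]-modules with differential d(c ⊗ f) = d̄(c) ⊗ vf. Then for each n there is a short exact sequence 0 → Im(d̄ₙ) → Hₙ(C ⊗ K[v], d) → Hₙ(C, d̄) ⊗_K K[v] → 0; consequently Hₙ(C ⊗ K[v], d) is finite dimensional over K if and only if Hₙ(C, d̄) = 0. -/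
/-! The twisted differential factors as `d = (1 ⊗ v) ∘ (d̄ ⊗ 1)` and multiplication by `v` is
injective on `C ⊗ K[v]`, so the cycles of `d` are `ker d̄ ⊗ K[v]`, while its boundaries lie in
`Im d̄ ⊗ vK[v]`. Reducing the cycles modulo `Im d̄ ⊗ K[v]` maps the homology onto
`(ker d̄ / Im d̄) ⊗ K[v]`, with kernel `Im d̄ ⊗ K[v]/vK[v] ≅ Im d̄`, embedded by `x ↦ [x ⊗ 1]`;
this map is injective because setting `v = 0` kills every boundary. As `K[v]` is infinite
dimensional, the homology is finite dimensional exactly when `ker d̄ / Im d̄` vanishes. -/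

open Polynomial TensorProduct LinearMap

noncomputable section

section PolynomialPresentation

variable {K P : Type*} [CommRing K] [CommRing P] [Algebra K P] {v : P}

def evalZero (e : P ≃ₐ[K] K[X]) : P →ₐ[K] K := (aeval 0).comp e.toAlgHom

lemma not_finite_of_algEquiv_polynomial [Nontrivial K] (e : P ≃ₐ[K] K[X]) :
    ¬ Module.Finite K P :=
  fun _ ↦ Polynomial.not_finite (Module.Finite.equiv e.toLinearEquiv)

variable (e : P ≃ₐ[K] K[X])

lemma evalZero_eq_zero_of_eq_X (hv : e v = X) : evalZero e v = 0 := by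
  simp [evalZero, hv]

lemma dvd_sub_algebraMap_evalZero (hv : e v = X) (q : P) :
    v ∣ q - algebraMap K P (evalZero e q) := by
  have h := _root_.map_dvd e.symm (X_dvd_sub_C (p := e q))
  rw [← hv, e.symm_apply_apply, map_sub, e.symm_apply_apply] at h
  convert h using 2
  simp [evalZero, coeff_zero_eq_aeval_zero, ← algebraMap_eq]

lemma mulLeft_injective_of_eq_X (hv : e v = X) : Function.Injective (mulLeft K v) := by
  intro a b hab
  apply e.injective
  apply isRegular_X.left
  simpa [hv] using congrArg e hab

end PolynomialPresentation

section TwistedComplex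

variable {K P L N M : Type*} [CommRing K] [CommRing P] [Algebra K P]
  [AddCommGroup L] [Module K L] [AddCommGroup N] [Module K N] [AddCommGroup M] [Module K M]

def twist (v : P) (f : L →ₗ[K] N) : L ⊗[K] P →ₗ[K] N ⊗[K] P := map f (mulLeft K v)

@[simp]
lemma twist_tmul (v : P) (f : L →ₗ[K] N) (x : L) (q : P) :
    twist v f (x ⊗ₜ q) = f x ⊗ₜ (v * q) := rfl

abbrev homologyAt (f₁ : L →ₗ[K] N) (f₀ : N →ₗ[K] M) : Type _ :=
  ker f₀ ⧸ (range f₁).comap (ker f₀).subtype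

variable (N) in
def evalZeroTensor (e : P ≃ₐ[K] K[X]) : N ⊗[K] P →ₗ[K] N :=
  TensorProduct.rid K N ∘ₗ (evalZero e).toLinearMap.lTensor N

@[simp]
lemma evalZeroTensor_tmul (e : P ≃ₐ[K] K[X]) (x : N) (q : P) :
    evalZeroTensor N e (x ⊗ₜ q) = evalZero e q • x := by
  simp [evalZeroTensor]

lemma evalZeroTensor_comp_twist {v : P} (e : P ≃ₐ[K] K[X]) (hv : e v = X) (f : L →ₗ[K] N) :
    evalZeroTensor N e ∘ₗ twist v f = 0 := by
  ext x q
  simp [evalZero_eq_zero_of_eq_X e hv]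

/-- On a pure tensor `f l ⊗ q` this is `f l ⊗ (q - q(0)) = twist v f (l ⊗ r)`, where
`q - q(0) = v * r`. -/
lemma rTensor_subtype_sub_mem_range_twist {v : P} (e : P ≃ₐ[K] K[X]) (hv : e v = X)
    (f : L →ₗ[K] N) (u : range f ⊗[K] P) :
    (range f).subtype.rTensor P u - (evalZeroTensor (range f) e u : N) ⊗ₜ 1 ∈
      range (twist v f) := by
  induction u using TensorProduct.induction_on with
  | zero => simp
  | tmul s q =>
    obtain ⟨_, l, rfl⟩ := s
    obtain ⟨r, hr⟩ := dvd_sub_algebraMap_evalZero e hv q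
    refine ⟨l ⊗ₜ r, ?_⟩
    simp [← hr, tmul_sub, Algebra.algebraMap_eq_smul_one, smul_tmul]
  | add a b ha hb =>
    convert add_mem ha hb using 1
    simp only [map_add, Submodule.coe_add, add_tmul]
    abel

def boundaryToHomology (v : P) {f₁ : L →ₗ[K] N} {f₀ : N →ₗ[K] M} (h : f₀ ∘ₗ f₁ = 0) :
    range f₁ →ₗ[K] homologyAt (twist v f₁) (twist v f₀) :=
  Submodule.mkQ _ ∘ₗ ((TensorProduct.mk K N P).flip 1 ∘ₗ (range f₁).subtype).codRestrict _ (by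
    rintro ⟨_, l, rfl⟩
    simp [show f₀ (f₁ l) = 0 from congr($h l)])

lemma boundaryToHomology_injective {v : P} (e : P ≃ₐ[K] K[X]) (hv : e v = X)
    {f₁ : L →ₗ[K] N} {f₀ : N →ₗ[K] M} (h : f₀ ∘ₗ f₁ = 0) :
    Function.Injective (boundaryToHomology v h) := by
  rw [← ker_eq_bot, Submodule.eq_bot_iff]
  intro x hx
  obtain ⟨y, hy⟩ := (Submodule.Quotient.mk_eq_zero _).1 hx
  have := congr(evalZeroTensor N e $hy)
  rw [← comp_apply, evalZeroTensor_comp_twist e hv] at this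
  simpa using this.symm

end TwistedComplex

section TwistedComplexOverField

variable {K P L N M : Type*} [Field K] [CommRing P] [Algebra K P]
  [AddCommGroup L] [Module K L] [AddCommGroup N] [Module K N] [AddCommGroup M] [Module K M]

lemma ker_twist_eq_range_rTensor_subtype {v : P} (e : P ≃ₐ[K] K[X]) (hv : e v = X)
    (f₀ : N →ₗ[K] M) : ker (twist v f₀) = range ((ker f₀).subtype.rTensor P) := by
  have hinj : ker ((mulLeft K v).lTensor M) = ⊥ := ker_eq_bot.2 <|
    Module.Flat.lTensor_preserves_injective_linearMap _ (mulLeft_injective_of_eq_X e hv)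
  rw [twist, ← lTensor_comp_rTensor, ker_comp_of_ker_eq_bot _ hinj]
  exact (Module.Flat.rTensor_exact P (exact_subtype_ker_map f₀)).linearMap_ker_eq

def kerTwistEquiv {v : P} (e : P ≃ₐ[K] K[X]) (hv : e v = X) (f₀ : N →ₗ[K] M) :
    ker f₀ ⊗[K] P ≃ₗ[K] ker (twist v f₀) :=
  (LinearEquiv.ofInjective _ (Module.Flat.rTensor_preserves_injective_linearMap (M := P) _
    (ker f₀).injective_subtype)).trans
    (LinearEquiv.ofEq _ _ (ker_twist_eq_range_rTensor_subtype e hv f₀).symm)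

@[simp]
lemma coe_kerTwistEquiv_apply {v : P} (e : P ≃ₐ[K] K[X]) (hv : e v = X) (f₀ : N →ₗ[K] M)
    (w : ker f₀ ⊗[K] P) : (kerTwistEquiv e hv f₀ w : N ⊗[K] P) = (ker f₀).subtype.rTensor P w :=
  rfl

def homologyToTensor {v : P} (e : P ≃ₐ[K] K[X]) (hv : e v = X) {f₁ : L →ₗ[K] N}
    {f₀ : N →ₗ[K] M} (h : f₀ ∘ₗ f₁ = 0) :
    homologyAt (twist v f₁) (twist v f₀) →ₗ[K] homologyAt f₁ f₀ ⊗[K] P :=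
  Submodule.liftQ _ ((Submodule.mkQ _).rTensor P ∘ₗ (kerTwistEquiv e hv f₀).symm.toLinearMap) (by
    rintro z ⟨y, hy⟩
    let f₁' := f₁.codRestrict (ker f₀) (fun l ↦ by simpa using congr($h l))
    have hz : (kerTwistEquiv e hv f₀).symm z = twist v f₁' y := by
      rw [LinearEquiv.symm_apply_eq, Subtype.ext_iff, coe_kerTwistEquiv_apply]
      simp only [twist, ← comp_apply, rTensor_comp_map, f₁', subtype_comp_codRestrict]
      exact hy.symm
    have hπ : ((range f₁).comap (ker f₀).subtype).mkQ ∘ₗ f₁' = 0 := by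
      ext l
      exact (Submodule.Quotient.mk_eq_zero _).2 ⟨l, rfl⟩
    rw [mem_ker, comp_apply, LinearEquiv.coe_coe, hz, twist, ← comp_apply, rTensor_comp_map, hπ,
      map_zero_left, LinearMap.zero_apply])

@[simp]
lemma homologyToTensor_mk_kerTwistEquiv {v : P} (e : P ≃ₐ[K] K[X]) (hv : e v = X)
    {f₁ : L →ₗ[K] N} {f₀ : N →ₗ[K] M} (h : f₀ ∘ₗ f₁ = 0) (w : ker f₀ ⊗[K] P) :
    homologyToTensor e hv h (Submodule.Quotient.mk (kerTwistEquiv e hv f₀ w)) =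
      (Submodule.mkQ _).rTensor P w := by
  simp [homologyToTensor]

lemma homologyToTensor_surjective {v : P} (e : P ≃ₐ[K] K[X]) (hv : e v = X)
    {f₁ : L →ₗ[K] N} {f₀ : N →ₗ[K] M} (h : f₀ ∘ₗ f₁ = 0) :
    Function.Surjective (homologyToTensor e hv h) := by
  intro t
  obtain ⟨w, rfl⟩ := rTensor_surjective P (Submodule.mkQ_surjective _) t
  exact ⟨_, homologyToTensor_mk_kerTwistEquiv e hv h w⟩

lemma exact_boundaryToHomology_homologyToTensor {v : P} (e : P ≃ₐ[K] K[X]) (hv : e v = X)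
    {f₁ : L →ₗ[K] N} {f₀ : N →ₗ[K] M} (h : f₀ ∘ₗ f₁ = 0) :
    Function.Exact (boundaryToHomology v h) (homologyToTensor e hv h) := by
  have hle : range f₁ ≤ ker f₀ := range_le_ker_iff.2 h
  rw [exact_iff]
  apply le_antisymm
  · intro c hc
    obtain ⟨z, rfl⟩ := Submodule.mkQ_surjective _ c
    obtain ⟨w, rfl⟩ := (kerTwistEquiv e hv f₀).surjective z
    rw [mem_ker, Submodule.mkQ_apply, homologyToTensor_mk_kerTwistEquiv] at hc
    have hexact : Function.Exact (Submodule.inclusion hle)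
        ((range f₁).comap (ker f₀).subtype).mkQ := by
      rw [exact_iff, Submodule.ker_mkQ, Submodule.range_inclusion]
    obtain ⟨u, rfl⟩ := (rTensor_exact P hexact (Submodule.mkQ_surjective _) w).1 hc
    refine ⟨evalZeroTensor (range f₁) e u, (Submodule.Quotient.eq _).2 ?_⟩
    have key := neg_mem (rTensor_subtype_sub_mem_range_twist e hv f₁ u)
    rw [neg_sub] at key
    rw [Submodule.mem_comap, map_sub]
    convert key using 2
    · rfl
    · rw [Submodule.coe_subtype, coe_kerTwistEquiv_apply, ← comp_apply, ← rTensor_comp,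
        Submodule.subtype_comp_inclusion]
  · rintro _ ⟨x, rfl⟩
    have hx : boundaryToHomology v h x =
        Submodule.Quotient.mk (kerTwistEquiv e hv f₀ (Submodule.inclusion hle x ⊗ₜ 1)) := rfl
    rw [mem_ker, hx, homologyToTensor_mk_kerTwistEquiv, rTensor_tmul, Submodule.mkQ_apply,
      (Submodule.Quotient.mk_eq_zero _).2 (show Submodule.inclusion hle x ∈ _ from x.2),
      zero_tmul]

lemma finite_right_of_finite_tensorProduct {V W : Type*} [AddCommGroup V] [Module K V]
    [AddCommGroup W] [Module K W] [Nontrivial V] [Module.Finite K (V ⊗[K] W)] :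
    Module.Finite K W := by
  obtain ⟨x, hx⟩ := exists_ne (0 : V)
  have := Module.Finite.of_injective _ <|
    Module.Flat.rTensor_preserves_injective_linearMap (M := W) (toSpanSingleton K V x)
      (smul_left_injective K hx)
  exact Module.Finite.equiv (TensorProduct.lid K W)

lemma finiteDimensional_homologyAt_twist_iff [FiniteDimensional K N] {v : P}
    (e : P ≃ₐ[K] K[X]) (hv : e v = X) {f₁ : L →ₗ[K] N} {f₀ : N →ₗ[K] M} (h : f₀ ∘ₗ f₁ = 0) :
    FiniteDimensional K (homologyAt (twist v f₁) (twist v f₀)) ↔ ker f₀ = range f₁ := by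
  have hsurj := homologyToTensor_surjective e hv h
  have hacyclic : ker f₀ = range f₁ ↔ Subsingleton (homologyAt f₁ f₀) := by
    rw [Submodule.Quotient.subsingleton_iff, Submodule.comap_subtype_eq_top]
    exact ⟨le_of_eq, fun hle ↦ le_antisymm hle (range_le_ker_iff.2 h)⟩
  rw [hacyclic]
  constructor
  · intro
    have := Module.Finite.of_surjective _ hsurj
    by_contra hnt
    rw [not_subsingleton_iff_nontrivial] at hnt
    exact not_finite_of_algEquiv_polynomial e
      (finite_right_of_finite_tensorProduct (V := homologyAt f₁ f₀))
  · intro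
    exact Module.Finite.of_exact (exact_boundaryToHomology_homologyToTensor e hv h) hsurj

end TwistedComplexOverField

end

/-- Let `K` be a field and `C` a chain complex `… → Cₙ → … → C₀ → 0` of
finite dimensional `K`-vector spaces with differentials `d̄ₙ : C_{n+1} → Cₙ`.  Consider the
complex `C ⊗_K K[v]` of free `K[v]`-modules with twisted differential `d(c ⊗ f) = d̄(c) ⊗ vf`
(here the polynomial ring `K[v]` is presented as a `K`-algebra `P` with a distinguished
element `v`, via an algebra isomorphism with `Polynomial K` sending `v` to `X`).
Then for each `n` there is a short exact sequence
`0 → Im(d̄_{n+1}) → H_{n+1}(C ⊗ K[v], d) → H_{n+1}(C, d̄) ⊗_K K[v] → 0`;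
consequently `H_{n+1}(C ⊗ K[v], d)` is finite dimensional over `K` if and only if
`H_{n+1}(C, d̄) = 0`. -/
theorem statement18 (K : Type) [Field K]
    (P : Type) [CommRing P] [Algebra K P] (v : P)
    (e : P ≃ₐ[K] Polynomial K) (hv : e v = Polynomial.X)
    (C : ℕ → Type) [∀ n, AddCommGroup (C n)] [∀ n, Module K (C n)]
    [∀ n, FiniteDimensional K (C n)]
    (dbar : ∀ n : ℕ, C (n + 1) →ₗ[K] C n)
    (hdd : ∀ n : ℕ, (dbar n) ∘ₗ (dbar (n + 1)) = 0)
    (d : ∀ j : ℕ, (C (j + 1) ⊗[K] P) →ₗ[K] (C j ⊗[K] P))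
    (hd : ∀ j : ℕ, d j = TensorProduct.map (dbar j) (LinearMap.mulLeft K v))
    (n : ℕ) :
    (∃ (f : ↥(LinearMap.range (dbar (n + 1))) →ₗ[K]
          (↥(LinearMap.ker (d n)) ⧸
            (LinearMap.range (d (n + 1))).comap (LinearMap.ker (d n)).subtype))
       (g : (↥(LinearMap.ker (d n)) ⧸
            (LinearMap.range (d (n + 1))).comap (LinearMap.ker (d n)).subtype) →ₗ[K]
          ((↥(LinearMap.ker (dbar n)) ⧸
            (LinearMap.range (dbar (n + 1))).comap (LinearMap.ker (dbar n)).subtype)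
              ⊗[K] P)),
      Function.Injective f ∧ Function.Surjective g ∧ LinearMap.range f = LinearMap.ker g)
    ∧ (FiniteDimensional K
        (↥(LinearMap.ker (d n)) ⧸
          (LinearMap.range (d (n + 1))).comap (LinearMap.ker (d n)).subtype) ↔
        LinearMap.ker (dbar n) = LinearMap.range (dbar (n + 1))) := by
  obtain rfl : d = fun j ↦ twist v (dbar j) := funext hd
  exact ⟨⟨boundaryToHomology v (hdd n), homologyToTensor e hv (hdd n),
    boundaryToHomology_injective e hv (hdd n), homologyToTensor_surjective e hv (hdd n),
    (exact_boundaryToHomology_homologyToTensor e hv (hdd n)).linearMap_ker_eq.symm⟩,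
    finiteDimensional_homologyAt_twist_iff e hv (hdd n)⟩
end
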